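/- Let a ∈ L^∞(ℝ) be invertible in L^∞(ℝ) (i.e. a⁻¹ ∈ L^∞(ℝ)), and suppose the Wiener–Hopf operator W(a ã⁻¹) is invertible on L²(ℝ⁺). Then the operator W(a)+H(ã) is invertible on L²(ℝ⁺) and (W(a)+H(ã))⁻¹ = (I − H(ã a⁻¹))∘W(a ã⁻¹)⁻¹∘W(ã⁻¹) + H(a⁻¹). -/

import Mathlib

open MeasureTheory Complex Filter Set

noncomputable section

namespace WienerHopf

/-- The space `L²(ℝ;ℂ)`. -/
abbrev L2 : Type := Lp ℂ 2 (volume : Measure ℝ)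

open Classical in
/-- Multiplication by a function `a : ℝ → ℂ`, as a bounded operator on `L²(ℝ)`.
(It is defined to be `0` in the degenerate case where `a` is not essentially bounded.) -/
def mul (a : ℝ → ℂ) : L2 →L[ℂ] L2 :=
  if h : MemLp a ⊤ (volume : Measure ℝ) then
    LinearMap.mkContinuous
      { toFun := fun f => ((Lp.memLp f).smul (r := 2) h).toLp (a • (f : ℝ → ℂ))
        map_add' := by
          intro f g
          rw [← MemLp.toLp_add]
          apply Lp.ext
          filter_upwards [MemLp.coeFn_toLp ((Lp.memLp (f + g)).smul (r := 2) h),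
            MemLp.coeFn_toLp (((Lp.memLp f).smul (r := 2) h).add
              ((Lp.memLp g).smul (r := 2) h)),
            Lp.coeFn_add f g] with t h1 h2 h3
          rw [h1, h2]
          simp only [Pi.smul_apply, smul_eq_mul, Pi.mul_apply, Pi.add_apply]
          rw [h3]
          simp [Pi.add_apply, mul_add]
        map_smul' := by
          intro m f
          simp only [RingHom.id_apply]
          rw [← MemLp.toLp_const_smul]
          apply Lp.ext
          filter_upwards [MemLp.coeFn_toLp ((Lp.memLp (m • f)).smul (r := 2) h),
            MemLp.coeFn_toLp (((Lp.memLp f).smul (r := 2) h).const_smul m),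
            Lp.coeFn_smul m f] with t h1 h2 h3
          rw [h1, h2]
          simp only [Pi.smul_apply, smul_eq_mul, Pi.mul_apply]
          rw [h3]
          simp only [Pi.smul_apply, smul_eq_mul]
          ring
        }
      (eLpNorm a ⊤ (volume : Measure ℝ)).toReal
      (by
        intro f
        simp only [LinearMap.coe_mk, AddHom.coe_mk]
        rw [Lp.norm_toLp, Lp.norm_def]
        have hle := eLpNorm_smul_le_mul_eLpNorm (Lp.aestronglyMeasurable f) h.1
          (p := ⊤) (q := 2) (r := 2)
        calc (eLpNorm (a • (f : ℝ → ℂ)) 2 (volume : Measure ℝ)).toReal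
            ≤ (eLpNorm a ⊤ (volume : Measure ℝ) * eLpNorm (f : ℝ → ℂ) 2 volume).toReal := by
              apply ENNReal.toReal_mono _ hle
              exact ENNReal.mul_ne_top h.2.ne (Lp.eLpNorm_lt_top f).ne
          _ = (eLpNorm a ⊤ (volume : Measure ℝ)).toReal *
              (eLpNorm (f : ℝ → ℂ) 2 (volume : Measure ℝ)).toReal := ENNReal.toReal_mul)
  else 0

theorem mul_coeFn {a : ℝ → ℂ} (h : MemLp a ⊤ (volume : Measure ℝ)) (f : L2) :
    (mul a f : ℝ → ℂ) =ᵐ[volume] fun t => a t * f t := by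
  rw [mul, dif_pos h]
  show ⇑(((Lp.memLp f).smul (r := 2) h).toLp (a • (f : ℝ → ℂ))) =ᵐ[volume]
    fun t => a t * f t
  exact (MemLp.coeFn_toLp _).trans
    (Eventually.of_forall fun t => by simp [Pi.smul_apply])

/-- `(-t)`-reflection is measure preserving. -/
theorem negMP : MeasurePreserving (fun t : ℝ => -t) volume volume :=
  Measure.measurePreserving_neg (volume : Measure ℝ)

/-- The reflection operator `(Jφ)(t) = φ(-t)` on `L²(ℝ)`. -/
def reflect : L2 →L[ℂ] L2 :=
  LinearMap.mkContinuous
    { toFun := ⇑(Lp.compMeasurePreserving (fun t : ℝ => -t) negMP)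
      map_add' := fun f g => map_add _ f g
      map_smul' := by
        intro m g
        simp only [RingHom.id_apply]
        apply Lp.ext
        filter_upwards [Lp.coeFn_compMeasurePreserving (f := fun t : ℝ => -t) (m • g) negMP,
          Lp.coeFn_smul m (Lp.compMeasurePreserving (fun t : ℝ => -t) negMP g),
          Lp.coeFn_compMeasurePreserving (f := fun t : ℝ => -t) g negMP,
          negMP.quasiMeasurePreserving.ae_eq_comp (Lp.coeFn_smul m g)] with t h1 h2 h3 h4
        rw [h1, h2, h4]
        simp only [Function.comp_apply, Pi.smul_apply, smul_eq_mul]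
        rw [h3]
        simp only [Function.comp_apply]
      }
    1
    (by
      intro g
      rw [one_mul]
      exact le_of_eq (Lp.norm_compMeasurePreserving g _))

theorem reflect_coeFn (g : L2) :
    (reflect g : ℝ → ℂ) =ᵐ[volume] fun t => g (-t) :=
  Lp.coeFn_compMeasurePreserving (f := fun t : ℝ => -t) g negMP

/-- The indicator function of `(0,∞)`. -/
def chiPlus : ℝ → ℂ := Set.indicator (Set.Ioi (0 : ℝ)) (fun _ => 1)

theorem chiPlus_memℒp : MemLp chiPlus ⊤ (volume : Measure ℝ) :=
  (memLp_top_const (1 : ℂ)).indicator measurableSet_Ioi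

/-- The subspace of `L²(ℝ)` consisting of functions vanishing a.e. on `(-∞,0)`;
it is identified with `L²(ℝ⁺)`. -/
def posSubspace : Submodule ℂ L2 where
  carrier := {f : L2 | ∀ᵐ t : ℝ ∂volume, t < 0 → (f : ℝ → ℂ) t = 0}
  zero_mem' := by
    filter_upwards [Lp.coeFn_zero ℂ 2 (volume : Measure ℝ)] with t ht _
    simp [ht]
  add_mem' := by
    intro f g hf hg
    filter_upwards [hf, hg, Lp.coeFn_add f g] with t h1 h2 h3 hlt
    rw [h3]
    simp [Pi.add_apply, h1 hlt, h2 hlt]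
  smul_mem' := by
    intro m f hf
    filter_upwards [hf, Lp.coeFn_smul m f] with t h1 h2 hlt
    rw [h2]
    simp [Pi.smul_apply, h1 hlt]

/-- `L²(ℝ⁺)`, realized as the subspace of `L²(ℝ)` of functions vanishing a.e. on `(-∞,0)`. -/
abbrev Lp2Plus : Type := ↥posSubspace

theorem chiPlus_mul_mem (g : L2) : mul chiPlus g ∈ posSubspace := by
  filter_upwards [mul_coeFn chiPlus_memℒp g] with t ht hlt
  rw [ht, chiPlus, Set.indicator_of_notMem (by simpa using hlt.le), zero_mul]

/-- Compression of an operator on `L²(ℝ)` to the subspace `L²(ℝ⁺)`: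
`φ ↦ χ₊ ⬝ (T φ)`. -/
def compress (T : L2 →L[ℂ] L2) : Lp2Plus →L[ℂ] Lp2Plus :=
  LinearMap.mkContinuous
    { toFun := fun φ => ⟨mul chiPlus (T φ.val), chiPlus_mul_mem _⟩
      map_add' := by intro φ ψ; apply Subtype.ext; simp
      map_smul' := by intro m φ; apply Subtype.ext; simp }
    ‖(mul chiPlus).comp T‖
    (by intro φ; exact ((mul chiPlus).comp T).le_opNorm φ.val)

theorem compress_coe (T : L2 →L[ℂ] L2) (φ : Lp2Plus) :
    (compress T φ : L2) = mul chiPlus (T φ.val) := rfl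

/-- An abstract realization of the Fourier transform
`(𝓕φ)(ξ) = ∫ e^{iξx} φ(x) dx` on `L²(ℝ)` (together with its inverse
`(𝓕⁻¹ψ)(x) = (2π)⁻¹ ∫ e^{-iξx} ψ(ξ) dξ`): a continuous linear bijection of `L²(ℝ)`
that is given by the above integral formulas on integrable functions.  By density
of `L¹ ∩ L²` in `L²`, these properties determine the operator uniquely, and by the
Fourier–Plancherel theory such an operator exists. -/
structure FourierL2 where
  equiv : L2 ≃L[ℂ] L2
  forward : ∀ φ : L2, Integrable (φ : ℝ → ℂ) volume →
      (equiv φ : ℝ → ℂ) =ᵐ[volume]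
        fun ξ : ℝ => ∫ x : ℝ, Complex.exp (Complex.I * ξ * x) * φ x
  inverse : ∀ ψ : L2, Integrable (ψ : ℝ → ℂ) volume →
      (equiv.symm ψ : ℝ → ℂ) =ᵐ[volume]
        fun x : ℝ => (2 * Real.pi : ℂ)⁻¹ * ∫ ξ : ℝ, Complex.exp (-(Complex.I * ξ * x)) * ψ ξ

/-- `W⁰(a) = 𝓕⁻¹ M_a 𝓕`, the convolution (Fourier multiplier) operator on `L²(ℝ)`. -/
def W0 (F : FourierL2) (a : ℝ → ℂ) : L2 →L[ℂ] L2 :=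
  (F.equiv.symm : L2 →L[ℂ] L2).comp ((mul a).comp (F.equiv : L2 →L[ℂ] L2))

/-- The Wiener–Hopf operator `W(a) = χ₊ W⁰(a)` on `L²(ℝ⁺)`. -/
def W (F : FourierL2) (a : ℝ → ℂ) : Lp2Plus →L[ℂ] Lp2Plus :=
  compress (W0 F a)

/-- The Hankel operator `H(b) = χ₊ W⁰(b) J` on `L²(ℝ⁺)`. -/
def H (F : FourierL2) (b : ℝ → ℂ) : Lp2Plus →L[ℂ] Lp2Plus :=
  compress ((W0 F b).comp reflect)

/-- `a` is invertible in the Banach algebra `L^∞(ℝ)`: `a ∈ L^∞`, `a ≠ 0` a.e.,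
and the pointwise inverse `a⁻¹` again belongs to `L^∞`. -/
def InvertibleLinf (a : ℝ → ℂ) : Prop :=
  MemLp a ⊤ (volume : Measure ℝ) ∧ (∀ᵐ t : ℝ ∂volume, a t ≠ 0) ∧
    MemLp (fun t => (a t)⁻¹) ⊤ (volume : Measure ℝ)

/-- `(a,b)` is a matching pair: `a, b` are invertible in `L^∞(ℝ)` and
`a(t)a(-t) = b(t)b(-t)` for a.e. `t`. -/
def MatchingPair (a b : ℝ → ℂ) : Prop :=
  InvertibleLinf a ∧ InvertibleLinf b ∧
    ∀ᵐ t : ℝ ∂volume, a t * a (-t) = b t * b (-t)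

/-!
`W⁰(b)` commutes with the reflection up to reflecting the symbol, `J W⁰(b) = W⁰(b̃) J`,
because the Fourier transform commutes with `J`. Splitting `g = χ₊ g + J χ₊ J g` inside
`χ₊ W⁰(u) W⁰(v)` then gives the product rules `W(uv) = W(u)W(v) + H(u)H(ṽ)` and
`H(uv) = W(u)H(v) + H(u)W(ṽ)`, which combine to

* `(W(u) + H(u)) (W(v) + H(ṽ)) = W(uv) + H(uṽ)`,
* `(W(u) + H(ũ)) H(w) + (H(u) + W(ũ)) W(w̃) = W(ũw̃) + H(uw)`.

With `A = W(a) + H(ã)`, `B = H(a) + W(ã)` and `C = W(aã⁻¹)`, the second identity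
at `w = ãa⁻¹` and at `w = a⁻¹` reads `A H(ãa⁻¹) + B C = A` and
`A H(a⁻¹) + B W(ã⁻¹) = I`, so `A K = I`; the first one at `u = ã⁻¹`, `v = a` reads
`(W(ã⁻¹) + H(ã⁻¹)) A = C`, so `A` also has a left inverse, and `K` is a two-sided
inverse.
-/

theorem mul_congr {a b : ℝ → ℂ} (hab : a =ᵐ[volume] b) : mul a = mul b := by
  by_cases ha : MemLp a ⊤ (volume : Measure ℝ)
  · ext f
    filter_upwards [mul_coeFn ha f, mul_coeFn (ha.ae_eq hab) f, hab] with t h1 h2 h3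
    rw [h1, h2, h3]
  · have hb : ¬ MemLp b ⊤ (volume : Measure ℝ) := fun hb => ha (hb.ae_eq hab.symm)
    rw [mul, mul, dif_neg ha, dif_neg hb]

theorem mul_comp_mul {a b : ℝ → ℂ} (ha : MemLp a ⊤ (volume : Measure ℝ))
    (hb : MemLp b ⊤ (volume : Measure ℝ)) :
    (mul a).comp (mul b) = mul (fun t => a t * b t) := by
  ext f
  filter_upwards [mul_coeFn ha (mul b f), mul_coeFn (hb.mul' ha) f, mul_coeFn hb f]
    with t h1 h2 h3
  rw [ContinuousLinearMap.comp_apply, h1, h2, h3, mul_assoc]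

theorem mul_add_mul {a b : ℝ → ℂ} (ha : MemLp a ⊤ (volume : Measure ℝ))
    (hb : MemLp b ⊤ (volume : Measure ℝ)) :
    mul a + mul b = mul (a + b) := by
  ext f
  filter_upwards [mul_coeFn ha f, mul_coeFn hb f, mul_coeFn (ha.add hb) f,
    Lp.coeFn_add (mul a f) (mul b f)] with t h1 h2 h3 h4
  rw [add_apply, h4, Pi.add_apply, h1, h2, h3, Pi.add_apply, add_mul]

theorem mul_const_one : mul (fun _ : ℝ => (1 : ℂ)) = ContinuousLinearMap.id ℂ L2 := by
  ext f
  filter_upwards [mul_coeFn (memLp_top_const (1 : ℂ)) f] with t h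
  rw [h, one_mul, ContinuousLinearMap.id_apply]

theorem memLp_comp_neg {p : ENNReal} {a : ℝ → ℂ} (ha : MemLp a p (volume : Measure ℝ)) :
    MemLp (fun t => a (-t)) p (volume : Measure ℝ) :=
  ha.comp_measurePreserving negMP

theorem reflect_comp_reflect : reflect.comp reflect = ContinuousLinearMap.id ℂ L2 := by
  ext f
  filter_upwards [reflect_coeFn (reflect f),
    negMP.quasiMeasurePreserving.ae_eq_comp (reflect_coeFn f)] with t h1 h2
  simpa [h1] using h2

theorem reflect_comp_mul {a : ℝ → ℂ} (ha : MemLp a ⊤ (volume : Measure ℝ)) :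
    reflect.comp (mul a) = (mul (fun t => a (-t))).comp reflect := by
  ext f
  filter_upwards [reflect_coeFn (mul a f),
    negMP.quasiMeasurePreserving.ae_eq_comp (mul_coeFn ha f),
    mul_coeFn (memLp_comp_neg ha) (reflect f), reflect_coeFn f] with t h1 h2 h3 h4
  rw [ContinuousLinearMap.comp_apply, ContinuousLinearMap.comp_apply, h1, h3, h4]
  simpa using h2

theorem integrable_reflect {f : L2} (hf : Integrable f volume) : Integrable (reflect f) volume :=
  (memLp_one_iff_integrable.mp (memLp_comp_neg (memLp_one_iff_integrable.mpr hf))).congr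
    (reflect_coeFn f).symm

theorem integrable_simpleFunc (s : Lp.simpleFunc ℂ 2 (volume : Measure ℝ)) :
    Integrable (s : L2) volume :=
  ((SimpleFunc.memLp_iff_integrable (p := 2) two_ne_zero ENNReal.ofNat_ne_top).mp
    (Lp.simpleFunc.memLp s)).congr (Lp.simpleFunc.toSimpleFunc_eq_toFun s)

theorem fourier_reflect_of_integrable (F : FourierL2) {φ : L2} (hφ : Integrable φ volume) :
    F.equiv (reflect φ) = reflect (F.equiv φ) := by
  have hJφ : (fun ξ : ℝ => ∫ x : ℝ, exp (I * ξ * x) * reflect φ x)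
      = fun ξ : ℝ => ∫ x : ℝ, exp (I * (-ξ : ℝ) * x) * φ x := by
    funext ξ
    rw [← integral_neg_eq_self (fun x : ℝ => exp (I * (-ξ : ℝ) * x) * φ x)]
    refine integral_congr_ae ?_
    filter_upwards [reflect_coeFn φ] with x hx
    rw [hx]
    push_cast
    ring_nf
  apply Lp.ext
  filter_upwards [hJφ ▸ F.forward (reflect φ) (integrable_reflect hφ),
    reflect_coeFn (F.equiv φ),
    negMP.quasiMeasurePreserving.ae_eq_comp (F.forward φ hφ)] with t h1 h2 h3
  rw [h1, h2]
  exact h3.symm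

theorem fourier_comp_reflect (F : FourierL2) :
    (F.equiv : L2 →L[ℂ] L2).comp reflect = reflect.comp (F.equiv : L2 →L[ℂ] L2) :=
  DFunLike.coe_injective <|
    (Lp.simpleFunc.denseRange (E := ℂ) (p := 2) (μ := volume) ENNReal.ofNat_ne_top).equalizer
      (ContinuousLinearMap.continuous _) (ContinuousLinearMap.continuous _)
      (funext fun s => fourier_reflect_of_integrable F (integrable_simpleFunc s))

theorem fourier_symm_comp_reflect (F : FourierL2) :
    (F.equiv.symm : L2 →L[ℂ] L2).comp reflect
      = reflect.comp (F.equiv.symm : L2 →L[ℂ] L2) := by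
  ext1 ψ
  apply F.equiv.injective
  have h := DFunLike.congr_fun (fourier_comp_reflect F) (F.equiv.symm ψ)
  simp only [ContinuousLinearMap.comp_apply, ContinuousLinearEquiv.coe_coe] at h ⊢
  rw [h, F.equiv.apply_symm_apply, F.equiv.apply_symm_apply]

theorem chiPlus_add_chiPlus_neg {t : ℝ} (ht : t ≠ 0) : chiPlus t + chiPlus (-t) = 1 := by
  rcases ht.lt_or_gt with h | h
  · simp [chiPlus, h.not_gt, neg_pos.mpr h]
  · simp [chiPlus, h, h.le]

theorem mul_chiPlus_add_reflect_mul_chiPlus_reflect (g : L2) :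
    mul chiPlus g + reflect (mul chiPlus (reflect g)) = g := by
  have hsplit : mul chiPlus + mul (fun t => chiPlus (-t)) = ContinuousLinearMap.id ℂ L2 := by
    rw [mul_add_mul chiPlus_memℒp (memLp_comp_neg chiPlus_memℒp), ← mul_const_one]
    refine mul_congr ?_
    filter_upwards [Measure.ae_ne volume 0] with t ht
    exact chiPlus_add_chiPlus_neg ht
  have hJ := DFunLike.congr_fun (reflect_comp_mul chiPlus_memℒp) (reflect g)
  have hJJ := DFunLike.congr_fun reflect_comp_reflect g
  simp only [ContinuousLinearMap.comp_apply, ContinuousLinearMap.id_apply] at hJ hJJ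
  rw [hJ, hJJ]
  exact DFunLike.congr_fun hsplit g

theorem mul_chiPlus_of_mem {φ : L2} (hφ : φ ∈ posSubspace) : mul chiPlus φ = φ := by
  apply Lp.ext
  filter_upwards [mul_coeFn chiPlus_memℒp φ, hφ, Measure.ae_ne volume 0] with t h1 h2 h3
  rw [h1]
  rcases h3.lt_or_gt with h | h
  · rw [h2 h, mul_zero]
  · simp [chiPlus, h]

theorem mul_chiPlus_reflect_of_mem {φ : L2} (hφ : φ ∈ posSubspace) :
    mul chiPlus (reflect φ) = 0 := by
  apply Lp.ext
  filter_upwards [mul_coeFn chiPlus_memℒp (reflect φ), reflect_coeFn φ,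
    negMP.quasiMeasurePreserving.ae hφ, Lp.coeFn_zero ℂ 2 (volume : Measure ℝ)]
    with t h1 h2 h3 h4
  rw [h1, h2, h4, Pi.zero_apply]
  by_cases h : 0 < t
  · rw [h3 (neg_neg_of_pos h), mul_zero]
  · simp [chiPlus, h]

theorem compress_id : compress (ContinuousLinearMap.id ℂ L2) = 1 :=
  ContinuousLinearMap.ext fun φ => Subtype.ext (mul_chiPlus_of_mem φ.2)

theorem compress_reflect : compress reflect = 0 :=
  ContinuousLinearMap.ext fun φ => Subtype.ext (mul_chiPlus_reflect_of_mem φ.2)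

theorem compress_comp (S T : L2 →L[ℂ] L2) :
    compress (S.comp T) = (compress S).comp (compress T)
      + (compress (S.comp reflect)).comp (compress (reflect.comp T)) := by
  ext1 φ
  apply Subtype.ext
  change mul chiPlus (S (T φ)) = mul chiPlus (S (mul chiPlus (T φ)))
    + mul chiPlus (S (reflect (mul chiPlus (reflect (T φ)))))
  conv_lhs => rw [← mul_chiPlus_add_reflect_mul_chiPlus_reflect (T φ)]
  rw [map_add, map_add]

theorem W0_congr (F : FourierL2) {a b : ℝ → ℂ} (hab : a =ᵐ[volume] b) :
    W0 F a = W0 F b := by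
  rw [W0, W0, mul_congr hab]

theorem W0_const_one (F : FourierL2) :
    W0 F (fun _ => (1 : ℂ)) = ContinuousLinearMap.id ℂ L2 := by
  ext1 f
  simp [W0, mul_const_one]

theorem W0_comp_W0 (F : FourierL2) {a b : ℝ → ℂ} (ha : MemLp a ⊤ (volume : Measure ℝ))
    (hb : MemLp b ⊤ (volume : Measure ℝ)) :
    (W0 F a).comp (W0 F b) = W0 F (fun t => a t * b t) := by
  ext1 f
  simp only [W0, ContinuousLinearMap.comp_apply, ContinuousLinearEquiv.coe_coe,
    F.equiv.apply_symm_apply]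
  rw [← mul_comp_mul ha hb, ContinuousLinearMap.comp_apply]

theorem reflect_comp_W0 (F : FourierL2) {b : ℝ → ℂ}
    (hb : MemLp b ⊤ (volume : Measure ℝ)) :
    reflect.comp (W0 F b) = (W0 F (fun t => b (-t))).comp reflect := by
  rw [W0, W0, ← ContinuousLinearMap.comp_assoc, ← fourier_symm_comp_reflect,
    ContinuousLinearMap.comp_assoc, ← ContinuousLinearMap.comp_assoc reflect,
    reflect_comp_mul hb, ContinuousLinearMap.comp_assoc, ← fourier_comp_reflect]
  simp only [ContinuousLinearMap.comp_assoc]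

theorem W_congr (F : FourierL2) {a b : ℝ → ℂ} (hab : a =ᵐ[volume] b) : W F a = W F b := by
  rw [W, W, W0_congr F hab]

theorem H_congr (F : FourierL2) {a b : ℝ → ℂ} (hab : a =ᵐ[volume] b) : H F a = H F b := by
  rw [H, H, W0_congr F hab]

theorem W_const_one (F : FourierL2) : W F (fun _ => (1 : ℂ)) = 1 := by
  rw [W, W0_const_one, compress_id]

theorem H_const_one (F : FourierL2) : H F (fun _ => (1 : ℂ)) = 0 := by
  rw [H, W0_const_one, ContinuousLinearMap.id_comp, compress_reflect]

theorem W_mul (F : FourierL2) {u v : ℝ → ℂ} (hu : MemLp u ⊤ (volume : Measure ℝ))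
    (hv : MemLp v ⊤ (volume : Measure ℝ)) :
    W F (fun t => u t * v t) = W F u * W F v + H F u * H F (fun t => v (-t)) := by
  rw [W, ← W0_comp_W0 F hu hv, compress_comp, reflect_comp_W0 F hv]
  rfl

theorem H_mul (F : FourierL2) {u v : ℝ → ℂ} (hu : MemLp u ⊤ (volume : Measure ℝ))
    (hv : MemLp v ⊤ (volume : Measure ℝ)) :
    H F (fun t => u t * v t) = W F u * H F v + H F u * W F (fun t => v (-t)) := by
  have hJvJ : reflect.comp ((W0 F v).comp reflect) = W0 F (fun t => v (-t)) := by
    rw [← ContinuousLinearMap.comp_assoc, reflect_comp_W0 F hv, ContinuousLinearMap.comp_assoc,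
      reflect_comp_reflect, ContinuousLinearMap.comp_id]
  rw [H, ← W0_comp_W0 F hu hv, ContinuousLinearMap.comp_assoc, compress_comp, hJvJ]
  rfl

theorem W_add_H_mul_W_add_H (F : FourierL2) {u v : ℝ → ℂ}
    (hu : MemLp u ⊤ (volume : Measure ℝ)) (hv : MemLp v ⊤ (volume : Measure ℝ)) :
    (W F u + H F u) * (W F v + H F (fun t => v (-t)))
      = W F (fun t => u t * v t) + H F (fun t => u t * v (-t)) := by
  rw [W_mul F hu hv, H_mul F hu (memLp_comp_neg hv)]
  simp only [neg_neg]
  noncomm_ring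

theorem W_add_H_reflect_mul_H_add (F : FourierL2) {u w : ℝ → ℂ}
    (hu : MemLp u ⊤ (volume : Measure ℝ)) (hw : MemLp w ⊤ (volume : Measure ℝ)) :
    (W F u + H F (fun t => u (-t))) * H F w
        + (H F u + W F (fun t => u (-t))) * W F (fun t => w (-t))
      = W F (fun t => u (-t) * w (-t)) + H F (fun t => u t * w t) := by
  rw [W_mul F (memLp_comp_neg hu) (memLp_comp_neg hw), H_mul F hu hw]
  simp only [neg_neg]
  noncomm_ring

theorem mul_eq_one_and_mul_eq_one_of_factorizations {R : Type*} [Ring R]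
    {A B C E L P Q S K : R} (hP : A * P + B * C = A) (hQ : A * Q + B * S = 1) (hL : L * A = C)
    (hCE : C * E = 1) (hEC : E * C = 1) (hK : K = (1 - P) * (E * S) + Q) :
    A * K = 1 ∧ K * A = 1 := by
  have hright : A * K = 1 :=
    calc A * K = (A - A * P) * E * S + A * Q := by rw [hK]; noncomm_ring
      _ = B * (C * E) * S + A * Q := by rw [← eq_sub_of_add_eq' hP, mul_assoc B]
      _ = 1 := by rw [hCE, mul_one, add_comm, hQ]
  have hleft : E * L * A = 1 := by rw [mul_assoc, hL, hEC]
  exact ⟨hright, left_inv_eq_right_inv hleft hright ▸ hleft⟩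

theorem W_add_H_reflect_mul_H_ratio (F : FourierL2) {a : ℝ → ℂ} (ha : InvertibleLinf a) :
    (W F a + H F (fun t => a (-t))) * H F (fun t => a (-t) * (a t)⁻¹)
        + (H F a + W F (fun t => a (-t))) * W F (fun t => a t * (a (-t))⁻¹)
      = W F a + H F (fun t => a (-t)) := by
  obtain ⟨ha, ha0, hainv⟩ := ha
  convert W_add_H_reflect_mul_H_add F ha (hainv.mul' (memLp_comp_neg ha)) using 2
  · simp only [neg_neg]
  · refine W_congr F ?_
    filter_upwards [negMP.quasiMeasurePreserving.ae ha0] with t ht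
    field_simp
  · refine H_congr F ?_
    filter_upwards [ha0] with t ht
    field_simp

theorem W_add_H_reflect_mul_H_inv (F : FourierL2) {a : ℝ → ℂ} (ha : InvertibleLinf a) :
    (W F a + H F (fun t => a (-t))) * H F (fun t => (a t)⁻¹)
        + (H F a + W F (fun t => a (-t))) * W F (fun t => (a (-t))⁻¹) = 1 := by
  obtain ⟨ha, ha0, hainv⟩ := ha
  convert W_add_H_reflect_mul_H_add F ha hainv using 1
  rw [W_congr F (b := fun _ => 1) ?_, H_congr F (b := fun _ => 1) ?_,
    W_const_one, H_const_one, add_zero]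
  · filter_upwards [ha0] with t ht
    field_simp
  · filter_upwards [negMP.quasiMeasurePreserving.ae ha0] with t ht
    field_simp

theorem W_add_H_inv_reflect_mul_W_add_H_reflect (F : FourierL2) {a : ℝ → ℂ}
    (ha : InvertibleLinf a) :
    (W F (fun t => (a (-t))⁻¹) + H F (fun t => (a (-t))⁻¹)) * (W F a + H F (fun t => a (-t)))
      = W F (fun t => a t * (a (-t))⁻¹) := by
  obtain ⟨ha, ha0, hainv⟩ := ha
  convert W_add_H_mul_W_add_H F (memLp_comp_neg hainv) ha using 2
  rw [H_congr F (b := fun _ => 1) ?_, H_const_one, add_zero]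
  · exact W_congr F (.of_forall fun t => mul_comm _ _)
  · filter_upwards [negMP.quasiMeasurePreserving.ae ha0] with t ht
    field_simp

/-- If `a` is invertible in `L^∞(ℝ)` and `W(a ã⁻¹)` is invertible, then `W(a)+H(ã)` is
invertible with inverse `(I - H(ã a⁻¹)) W(a ã⁻¹)⁻¹ W(ã⁻¹) + H(a⁻¹)`. -/
theorem inverse_W_plus_H_reflected_symbol
    (F : FourierL2) (a : ℝ → ℂ) (ha : InvertibleLinf a)
    (E : Lp2Plus →L[ℂ] Lp2Plus)
    (hE1 : (W F (fun t => a t * (a (-t))⁻¹)).comp E = 1)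
    (hE2 : E.comp (W F (fun t => a t * (a (-t))⁻¹)) = 1)
    (K : Lp2Plus →L[ℂ] Lp2Plus)
    (hK : K = ((1 : Lp2Plus →L[ℂ] Lp2Plus) - H F (fun t => a (-t) * (a t)⁻¹)).comp
        (E.comp (W F (fun t => (a (-t))⁻¹))) + H F (fun t => (a t)⁻¹)) :
    (W F a + H F (fun t => a (-t))).comp K = 1 ∧
      K.comp (W F a + H F (fun t => a (-t))) = 1 :=
  mul_eq_one_and_mul_eq_one_of_factorizations (W_add_H_reflect_mul_H_ratio F ha)
    (W_add_H_reflect_mul_H_inv F ha) (W_add_H_inv_reflect_mul_W_add_H_reflect F ha) hE1 hE2 hK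

end WienerHopf
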